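/- arXiv:2004.05872 — 3 statements merged into one kernel-verified Lean document; each statement's English description precedes it below -/
import Mathlib

section
/- Let J be an N×N complex matrix with eigenvalues λ_1, ..., λ_N and f(λ) = det(λI - J). If λ_i is an eigenvalue of J, then ∑_{k=1}^N det(((λ_i I - J)^2)_{k|k}) = f'(λ_i)^2. -/
/-!
The principal minors of order `N - 1` of a matrix `B` sum to `(-1)^(N-1)` times the linear
coefficient of its characteristic polynomial, i.e. to the elementary symmetric function
`e_{N-1}` of its eigenvalues. For `B = (λ_i - J)^2` the eigenvalues are `(λ_i - λ_j)^2`, one of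
which vanishes, so `e_{N-1}` is `∏_{j ≠ i} (λ_i - λ_j)^2 = f'(λ_i)^2`.
-/

open Finset Polynomial

namespace Polynomial

theorem eval_derivative_prod_X_sub_C {ι R : Type*} [CommRing R] [DecidableEq ι]
    {s : Finset ι} (μ : ι → R) {i : ι} (hi : i ∈ s) :
    (derivative (∏ j ∈ s, (X - C (μ j)))).eval (μ i) = ∏ j ∈ s.erase i, (μ i - μ j) := by
  rw [← mul_prod_erase s _ hi]
  simp [eval_prod]

theorem coeff_one_eq_eval_derivative_zero {R : Type*} [Semiring R] (p : R[X]) :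
    p.coeff 1 = (derivative p).eval 0 := by
  simp [← coeff_zero_eq_eval_zero, coeff_derivative]

end Polynomial

namespace Matrix

variable {n R : Type*} [Fintype n] [DecidableEq n] [CommRing R]

theorem eval_charpoly_sq (A : Matrix n n R) (s : R) :
    (A ^ 2).charpoly.eval (s ^ 2) =
      (-1) ^ Fintype.card n * A.charpoly.eval s * A.charpoly.eval (-s) := by
  have hfactor : scalar n (s ^ 2) - A ^ 2 = -((scalar n s - A) * (scalar n (-s) - A)) := by
    simp only [map_pow, map_neg, sub_mul, mul_sub, (scalar_commute s (Commute.all s) A).eq]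
    noncomm_ring
  rw [eval_charpoly, eval_charpoly, eval_charpoly, hfactor, det_neg, det_mul, mul_assoc]

theorem charpoly_sub_scalar_eq_prod {μ : n → R} {c : R} {A : Matrix n n R}
    (hA : A.charpoly = ∏ j, (X - C (μ j))) :
    (A - scalar n c).charpoly = ∏ j, (X - C (μ j - c)) := by
  rw [charpoly_sub_scalar, hA, Polynomial.prod_comp]
  refine prod_congr rfl fun j _ => ?_
  simp only [sub_comp, X_comp, C_comp, C_sub]
  ring

theorem charpoly_sq_eq_prod {K : Type*} [Field K] [IsAlgClosed K] {μ : n → K}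
    {A : Matrix n n K} (hA : A.charpoly = ∏ j, (X - C (μ j))) :
    (A ^ 2).charpoly = ∏ j, (X - C (μ j ^ 2)) := by
  -- Over an algebraically closed field every point is a square, so `eval_charpoly_sq` suffices.
  refine Polynomial.funext fun u => ?_
  obtain ⟨s, rfl⟩ : ∃ s : K, s ^ 2 = u := IsAlgClosed.exists_pow_nat_eq u two_pos
  rw [eval_charpoly_sq, hA, eval_prod, eval_prod, eval_prod, ← card_univ, ← prod_const,
    ← prod_mul_distrib, ← prod_mul_distrib]
  refine prod_congr rfl fun j _ => ?_
  simp only [eval_sub, eval_X, eval_C]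
  ring

theorem sum_det_submatrix_succAbove {m : ℕ} (B : Matrix (Fin (m + 1)) (Fin (m + 1)) R) :
    ∑ k : Fin (m + 1), (B.submatrix k.succAbove k.succAbove).det =
      (-1) ^ m * B.charpoly.coeff 1 := by
  have hminors := charpoly_coeff_eq_sum_minors B m (by simp)
  rw [Fintype.card_fin, Nat.add_sub_cancel_left] at hminors
  rw [hminors, ← mul_assoc, ← pow_add, Even.neg_one_pow ⟨m, rfl⟩, one_mul]
  have hcompl : powersetCard m univ = univ.image fun k : Fin (m + 1) => ({k}ᶜ : Finset _) := by
    ext s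
    simp only [mem_powersetCard, subset_univ, true_and, mem_image, mem_univ]
    constructor
    · intro hs
      obtain ⟨k, hk⟩ := card_eq_one.mp (by rw [card_compl, hs]; simp : sᶜ.card = 1)
      exact ⟨k, by rw [← hk, compl_compl]⟩
    · rintro ⟨k, rfl⟩
      simp [card_compl]
  rw [hcompl, sum_image fun k _ l _ h => singleton_injective (compl_injective h)]
  refine sum_congr rfl fun k _ => ?_
  let e : Fin m ≃ {j // j ∈ ({k}ᶜ : Finset _)} :=
    (finSuccAboveEquiv k).trans (Equiv.subtypeEquivRight (by simp))
  rw [← det_submatrix_equiv_self e, submatrix_submatrix]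
  rfl

theorem sum_det_submatrix_succAbove_eq_prod {m : ℕ} {B : Matrix (Fin (m + 1)) (Fin (m + 1)) R}
    {μ : Fin (m + 1) → R} (hB : B.charpoly = ∏ j, (X - C (μ j))) {i : Fin (m + 1)}
    (hμ : μ i = 0) :
    ∑ k : Fin (m + 1), (B.submatrix k.succAbove k.succAbove).det = ∏ j ∈ univ.erase i, μ j := by
  rw [sum_det_submatrix_succAbove, hB, coeff_one_eq_eval_derivative_zero, ← hμ,
    eval_derivative_prod_X_sub_C _ (mem_univ i), hμ]
  simp only [zero_sub, prod_neg, card_erase_of_mem (mem_univ i), card_univ, Fintype.card_fin,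
    Nat.add_sub_cancel, ← mul_assoc, ← pow_add, Even.neg_one_pow ⟨m, rfl⟩, one_mul]

end Matrix

open Matrix in
theorem stmt6 (n : ℕ) (J : Matrix (Fin (n + 1)) (Fin (n + 1)) ℂ)
    (lam : Fin (n + 1) → ℂ)
    (hJ : J.charpoly = ∏ j, (X - C (lam j)))
    (f : ℂ → ℂ) (hf : f = fun z => Matrix.det (z • (1 : Matrix (Fin (n + 1)) (Fin (n + 1)) ℂ) - J))
    (i : Fin (n + 1)) :
    ∑ k : Fin (n + 1),
        Matrix.det (((lam i • (1 : Matrix (Fin (n + 1)) (Fin (n + 1)) ℂ) - J) ^ 2).submatrix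
          k.succAbove k.succAbove) =
      (deriv f (lam i)) ^ 2 := by
  have hf_charpoly : f = fun z => J.charpoly.eval z := by
    simp [hf, eval_charpoly, smul_one_eq_diagonal]
  have hderiv : deriv f (lam i) = ∏ j ∈ univ.erase i, (lam i - lam j) := by
    rw [hf_charpoly, Polynomial.deriv, hJ, eval_derivative_prod_X_sub_C _ (mem_univ i)]
  have hsq : (lam i • (1 : Matrix (Fin (n + 1)) (Fin (n + 1)) ℂ) - J) ^ 2 =
      (J - scalar _ (lam i)) ^ 2 := by
    rw [← neg_sq, neg_sub, scalar_apply, smul_one_eq_diagonal]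
  have hcharpoly := charpoly_sq_eq_prod (charpoly_sub_scalar_eq_prod (c := lam i) hJ)
  rw [hsq, sum_det_submatrix_succAbove_eq_prod hcharpoly (i := i) (by simp), hderiv, ← prod_pow]
  exact prod_congr rfl fun j _ => by ring
end

section
/- Let J be an N×N complex Hermitian matrix with distinct eigenvalues λ_1, ..., λ_N. Then ∑_{k=1}^N det(((λ_i I - J)(λ_i I - J)*)_{k|k}) = ∏_{k ≠ i} (λ_i - λ_k)^2 for each i. -/
open Finset Polynomial Matrix

/-!
Diagonalize `J = U diag(μ) U*` with `U` unitary and `μ` real. The sum of the principal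
`(N-1)`-minors of a matrix is the trace of its adjugate, which is invariant under unitary
conjugation. Since `lam i` is a root of the characteristic polynomial, `lam i = μ k` for some `k`,
so the sum equals `∑ₗ ∏_{j ≠ l} (μ k - μ j)²`, in which every term with `l ≠ k` contains the factor
`(μ k - μ k)² = 0`. Cancelling `X - lam i` from the two factorizations of the characteristic
polynomial and evaluating at `lam i` turns the remaining term into `∏_{j ≠ i} (lam i - lam j)²`.
-/

namespace Matrix

variable {R : Type*} [CommRing R]

theorem trace_adjugate_eq_sum_det_submatrix {n : ℕ} (M : Matrix (Fin (n + 1)) (Fin (n + 1)) R) :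
    (adjugate M).trace = ∑ k : Fin (n + 1), (M.submatrix k.succAbove k.succAbove).det := by
  refine Finset.sum_congr rfl fun k _ => ?_
  rw [diag_apply, adjugate_fin_succ_eq_det_submatrix, ← two_mul, pow_mul, neg_one_sq, one_pow,
    one_mul]

variable {m : Type*} [Fintype m] [DecidableEq m]

theorem trace_adjugate_diagonal (d : m → R) :
    (adjugate (diagonal d)).trace = ∑ k, ∏ j ∈ univ.erase k, d j := by
  rw [adjugate_diagonal, trace_diagonal]

theorem trace_adjugate_conjStarAlgAut [StarRing R] (U : unitary (Matrix m m R))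
    (M : Matrix m m R) :
    (adjugate (Unitary.conjStarAlgAut R _ U M)).trace = (adjugate M).trace := by
  rw [Unitary.conjStarAlgAut_apply, adjugate_mul_distrib, adjugate_mul_distrib, ← mul_assoc,
    trace_mul_cycle, ← adjugate_mul_distrib, Unitary.coe_star_mul_self, adjugate_one, one_mul]

end Matrix

theorem Fintype.sum_prod_erase_of_eq_zero {ι R : Type*} [Fintype ι] [DecidableEq ι]
    [CommSemiring R] {f : ι → R} {i : ι} (hi : f i = 0) :
    ∑ k, ∏ j ∈ univ.erase k, f j = ∏ j ∈ univ.erase i, f j :=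
  Fintype.sum_eq_single i fun _ hk => prod_eq_zero (mem_erase.2 ⟨hk.symm, mem_univ i⟩) hi

theorem Polynomial.prod_erase_sub_eq_of_prod_X_sub_C_eq {R ι κ : Type*} [CommRing R] [Fintype ι]
    [DecidableEq ι] [Fintype κ] [DecidableEq κ] {f : ι → R} {g : κ → R}
    (h : ∏ j, (X - C (f j)) = ∏ j, (X - C (g j))) {i : ι} {k : κ} (hik : f i = g k) :
    ∏ j ∈ univ.erase i, (f i - f j) = ∏ j ∈ univ.erase k, (g k - g j) := by
  rw [← mul_prod_erase univ _ (mem_univ i), ← mul_prod_erase univ _ (mem_univ k), hik] at h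
  simpa [eval_prod, hik] using congrArg (eval (g k)) ((monic_X_sub_C (g k)).isRegular.left h)

namespace Matrix.IsHermitian

variable {m : Type*} [Fintype m] [DecidableEq m] {J : Matrix m m ℂ} (hJ : J.IsHermitian)
include hJ

theorem exists_eigenvalues_eq_of_isRoot_charpoly {c : ℂ} (hc : J.charpoly.IsRoot c) :
    ∃ k, (hJ.eigenvalues k : ℂ) = c := by
  rw [hJ.charpoly_eq, IsRoot, eval_prod, prod_eq_zero_iff] at hc
  obtain ⟨k, -, hk⟩ := hc
  exact ⟨k, (sub_eq_zero.1 (by simpa using hk)).symm⟩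

theorem sub_mul_conjTranspose_sub (r : ℝ) :
    ((r : ℂ) • 1 - J) * ((r : ℂ) • 1 - J)ᴴ =
      Unitary.conjStarAlgAut ℂ _ hJ.eigenvectorUnitary
        (diagonal fun j => ((r : ℂ) - hJ.eigenvalues j) ^ 2) := by
  set φ := Unitary.conjStarAlgAut ℂ _ hJ.eigenvectorUnitary
  have hA : (r : ℂ) • 1 - J = φ (diagonal fun j => (r : ℂ) - hJ.eigenvalues j) := by
    conv_lhs => rw [hJ.spectral_theorem]
    rw [← map_one φ, ← map_smul, ← map_sub, smul_one_eq_diagonal, diagonal_sub]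
    rfl
  rw [hA, ← star_eq_conjTranspose, ← map_star, ← map_mul, star_eq_conjTranspose,
    diagonal_conjTranspose, diagonal_mul_diagonal]
  congr 2 with j
  simp [sq]

end Matrix.IsHermitian

theorem stmt9_general (n : ℕ) (J : Matrix (Fin (n + 1)) (Fin (n + 1)) ℂ)
    (hH : J.IsHermitian)
    (lam : Fin (n + 1) → ℂ)
    (hJ : J.charpoly = ∏ j, (X - C (lam j)))
    (i : Fin (n + 1)) :
    ∑ k : Fin (n + 1),
        Matrix.det
          (((lam i • (1 : Matrix (Fin (n + 1)) (Fin (n + 1)) ℂ) - J) *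
            (lam i • (1 : Matrix (Fin (n + 1)) (Fin (n + 1)) ℂ) - J)ᴴ).submatrix
          k.succAbove k.succAbove) =
      ∏ k ∈ Finset.univ.erase i, (lam i - lam k) ^ 2 := by
  have hroot : J.charpoly.IsRoot (lam i) := by
    rw [hJ, IsRoot, eval_prod]
    exact prod_eq_zero (mem_univ i) (by simp)
  obtain ⟨k, hk⟩ := hH.exists_eigenvalues_eq_of_isRoot_charpoly hroot
  have hprod : ∏ j ∈ univ.erase k, ((hH.eigenvalues k : ℂ) - hH.eigenvalues j) =
      ∏ j ∈ univ.erase i, (lam i - lam j) :=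
    prod_erase_sub_eq_of_prod_X_sub_C_eq (hH.charpoly_eq.symm.trans hJ) hk
  rw [← trace_adjugate_eq_sum_det_submatrix, ← hk, hH.sub_mul_conjTranspose_sub,
    trace_adjugate_conjStarAlgAut, trace_adjugate_diagonal,
    Fintype.sum_prod_erase_of_eq_zero (i := k) (by simp), prod_pow, prod_pow, hprod, hk]

theorem stmt9 (n : ℕ) (J : Matrix (Fin (n + 1)) (Fin (n + 1)) ℂ)
    (hH : J.IsHermitian)
    (lam : Fin (n + 1) → ℂ) (hd : Function.Injective lam)
    (hJ : J.charpoly = ∏ j, (X - C (lam j)))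
    (i : Fin (n + 1)) :
    ∑ k : Fin (n + 1),
        Matrix.det
          (((lam i • (1 : Matrix (Fin (n + 1)) (Fin (n + 1)) ℂ) - J) *
            (lam i • (1 : Matrix (Fin (n + 1)) (Fin (n + 1)) ℂ) - J)ᴴ).submatrix
          k.succAbove k.succAbove) =
      ∏ k ∈ Finset.univ.erase i, (lam i - lam k) ^ 2 :=
  stmt9_general n J hH lam hJ i
end

section
/- Let J be an N×N complex matrix with distinct eigenvalues λ_1, ..., λ_N. Then the diagonal quantity O_{ii} := (∑_{k=1}^N det(((λ_i I - J)(λ_i I - J)*)_{k|k})) / ∏_{p ≠ i} |λ_i - λ_p|^2 is a real number satisfying O_{ii} ≥ 1. -/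
/-!
Put `B = λᵢ • 1 - J` and `d = ∏_{p ≠ i} (λᵢ - λₚ)`. The sum of the principal `(N-1)`-minors of
`B Bᴴ` is `tr adj(B Bᴴ) = tr (adj(B)ᴴ adj(B)) = ‖adj B‖²` (Frobenius norm), and the denominator
is `|d|²`. Since `χ_J = (X - λᵢ) g` with `g(λᵢ) = d`, an eigenvector `v` of `J` for `λᵢ` satisfies
`adj(B) v = d v`, so `|d| ≤ ‖adj B‖`; simplicity of the spectrum makes `d ≠ 0`.
-/

open Finset Polynomial Matrix

namespace Matrix

section Eigenvector

variable {n : Type*} [Fintype n] [DecidableEq n]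

theorem exists_mulVec_eq_smul_of_isRoot_charpoly {K : Type*} [Field K] {M : Matrix n n K} {μ : K}
    (hμ : M.charpoly.IsRoot μ) : ∃ v ≠ 0, M *ᵥ v = μ • v := by
  rw [IsRoot, eval_charpoly, ← exists_mulVec_eq_zero_iff] at hμ
  obtain ⟨v, hv0, hv⟩ := hμ
  refine ⟨v, hv0, ?_⟩
  rw [sub_mulVec, sub_eq_zero, scalar_apply, ← smul_one_eq_diagonal, smul_mulVec,
    one_mulVec] at hv
  exact hv.symm

/- Over `R[X]` one has `(X - μ) • (adj (charmatrix M) *ᵥ v) = χ_M • v = (X - μ) • (g • v)`;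
cancel the monic factor `X - μ` first, and only then evaluate at `X = μ`. -/
theorem adjugate_smul_one_sub_mulVec {R : Type*} [CommRing R] {M : Matrix n n R} {v : n → R}
    {μ : R} {g : R[X]} (hv : M *ᵥ v = μ • v) (hχ : M.charpoly = (X - C μ) * g) :
    adjugate (μ • 1 - M) *ᵥ v = g.eval μ • v := by
  set v' : n → R[X] := fun k => C (v k)
  have hcv : charmatrix M *ᵥ v' = (X - C μ) • v' := by
    funext k
    have hMv : (M.map C *ᵥ v') k = C μ * v' k :=
      (RingHom.map_mulVec C M v k).symm.trans (by simp [hv, v'])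
    simp [charmatrix, sub_mulVec, hMv, sub_mul]
  have hcancel : adjugate (charmatrix M) *ᵥ v' = g • v' := by
    have h : (X - C μ) • (adjugate (charmatrix M) *ᵥ v') = (X - C μ) • (g • v') := by
      rw [← mulVec_smul, ← hcv, mulVec_mulVec, adjugate_mul, ← charpoly, hχ, smul_mulVec,
        one_mulVec, mul_smul]
    funext k
    exact (monic_X_sub_C μ).isRegular.left (congrFun h k)
  have hev : (evalRingHom μ).mapMatrix (charmatrix M) = μ • 1 - M := by
    ext i j
    obtain rfl | hij := eq_or_ne i j <;> simp [*]
  funext k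
  have h := congrArg (evalRingHom μ) (congrFun hcancel k)
  rw [RingHom.map_mulVec, ← RingHom.mapMatrix_apply, RingHom.map_adjugate, hev] at h
  simpa [v', Function.comp_def] using h

end Eigenvector

theorem sum_det_submatrix_succAbove_eq_trace_adjugate {R : Type*} [CommRing R] {n : ℕ}
    (A : Matrix (Fin (n + 1)) (Fin (n + 1)) R) :
    ∑ k : Fin (n + 1), (A.submatrix k.succAbove k.succAbove).det = (adjugate A).trace := by
  refine Finset.sum_congr rfl fun k _ => ?_
  rw [diag_apply, adjugate_fin_succ_eq_det_submatrix, ← two_mul, pow_mul, neg_one_sq, one_pow,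
    one_mul]

section Frobenius

attribute [local instance] frobeniusNormedAddCommGroup frobeniusNormSMulClass

variable {𝕜 : Type*} [RCLike 𝕜] {m n : Type*} [Fintype m] [Fintype n]

theorem frobenius_norm_sq (A : Matrix m n 𝕜) : ‖A‖ ^ 2 = ∑ i, ∑ j, ‖A i j‖ ^ 2 := by
  rw [frobenius_norm_def, ← Real.rpow_natCast, ← Real.rpow_mul (by positivity)]
  norm_num

theorem trace_conjTranspose_mul_self (A : Matrix m n 𝕜) :
    (Aᴴ * A).trace = ((‖A‖ ^ 2 : ℝ) : 𝕜) := by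
  rw [frobenius_norm_sq, Finset.sum_comm]
  simp [trace, mul_apply, RCLike.conj_mul]

theorem norm_le_frobenius_norm_of_mulVec_eq_smul {A : Matrix m m 𝕜} {v : m → 𝕜} {d : 𝕜}
    (hv : v ≠ 0) (h : A *ᵥ v = d • v) : ‖d‖ ≤ ‖A‖ := by
  set V := replicateCol Unit v
  have hV : 0 < ‖V‖ := norm_pos_iff.2 ((replicateCol_eq_zero v).not.2 hv)
  refine le_of_mul_le_mul_right ?_ hV
  calc ‖d‖ * ‖V‖ = ‖A * V‖ := by
        rw [← norm_smul, ← replicateCol_smul, ← h, replicateCol_mulVec]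
    _ ≤ ‖A‖ * ‖V‖ := frobenius_norm_mul A V

theorem sum_det_submatrix_mul_conjTranspose {N : ℕ} (B : Matrix (Fin (N + 1)) (Fin (N + 1)) 𝕜) :
    ∑ k : Fin (N + 1), ((B * Bᴴ).submatrix k.succAbove k.succAbove).det =
      ((‖adjugate B‖ ^ 2 : ℝ) : 𝕜) := by
  rw [sum_det_submatrix_succAbove_eq_trace_adjugate, adjugate_mul_distrib,
    ← adjugate_conjTranspose, trace_conjTranspose_mul_self]

end Frobenius

end Matrix

theorem stmt11 (n : ℕ) (J : Matrix (Fin (n + 1)) (Fin (n + 1)) ℂ)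
    (lam : Fin (n + 1) → ℂ) (hd : Function.Injective lam)
    (hJ : J.charpoly = ∏ j, (X - C (lam j)))
    (i : Fin (n + 1)) (O : ℂ)
    (hO : O = (∑ k : Fin (n + 1),
        Matrix.det
          (((lam i • (1 : Matrix (Fin (n + 1)) (Fin (n + 1)) ℂ) - J) *
            (lam i • (1 : Matrix (Fin (n + 1)) (Fin (n + 1)) ℂ) - J)ᴴ).submatrix
          k.succAbove k.succAbove)) /
      ((∏ p ∈ Finset.univ.erase i, ‖lam i - lam p‖ ^ 2 : ℝ) : ℂ)) :
    O.im = 0 ∧ 1 ≤ O.re := by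
  set g : ℂ[X] := ∏ p ∈ univ.erase i, (X - C (lam p))
  have hχ : J.charpoly = (X - C (lam i)) * g := by
    rw [hJ, ← mul_prod_erase univ (fun j => X - C (lam j)) (mem_univ i)]
  obtain ⟨v, hv0, hJv⟩ :=
    exists_mulVec_eq_smul_of_isRoot_charpoly (M := J) (μ := lam i) (by simp [IsRoot, hχ])
  have hg0 : g.eval (lam i) ≠ 0 := by
    simp only [g, eval_prod, eval_sub, eval_X, eval_C]
    exact prod_ne_zero_iff.2 fun p hp => sub_ne_zero.2 (hd.ne (ne_of_mem_erase hp).symm)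
  have hden : ∏ p ∈ univ.erase i, ‖lam i - lam p‖ ^ 2 = ‖g.eval (lam i)‖ ^ 2 := by
    simp [g, eval_prod, prod_pow, norm_prod]
  have hle := norm_le_frobenius_norm_of_mulVec_eq_smul hv0 (adjugate_smul_one_sub_mulVec hJv hχ)
  rw [hO, sum_det_submatrix_mul_conjTranspose, hden, RCLike.ofReal_eq_complex_ofReal,
    ← Complex.ofReal_div]
  refine ⟨Complex.ofReal_im _, ?_⟩
  rw [Complex.ofReal_re, one_le_div (pow_pos (norm_pos_iff.2 hg0) 2)]
  exact pow_le_pow_left₀ (norm_nonneg _) hle 2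
end
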